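/- For all a > 0 and β > 0, the improper integral ∫_0^∞ w^{-3/2} e^{-a/w} cos(β·w) dw converges and equals √(π/a) · e^{-√(2aβ)} · cos(√(2aβ)). (This is the real part of the half-line Fourier transform of f(w) = w^{-3/2} e^{-a/w} at frequency β.) -/

import Mathlib

/-!
The substitution `w = a / u²` turns `∫₀^∞ w^{-3/2} e^{-a/w} e^{iβw} dw` into
`(2/√a) K(-iaβ)` with `K(d) = ∫₀^∞ exp(-u² - d/u²) du`. For real `d > 0`, completing the square
`u² + d/u² = (u - √d/u)² + 2√d` and the Cauchy–Schlömilch substitution `t = u - √d/u` give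
`K(d) = (√π/2) e^{-2√d}`. Both sides are holomorphic on `Re d > 0`, so they agree there by the
identity theorem, and by dominated convergence also on the imaginary axis. Since
`(-iq)^{1/2} = √(2q)/2 · (1 - i)`, the real part is `√(π/a) e^{-√(2aβ)} cos √(2aβ)`.
-/

open Real MeasureTheory Set Filter Topology
open scoped Complex
open Complex (I)

lemma hasDerivAt_sub_const_div (k : ℝ) {u : ℝ} (hu : u ≠ 0) :
    HasDerivAt (fun u => u - k / u) (1 + k / u ^ 2) u :=
  ((hasDerivAt_id' u).fun_sub ((hasDerivAt_const u k).fun_div (hasDerivAt_id' u) hu)).congr_deriv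
    (by ring)

lemma hasDerivAt_const_div (k : ℝ) {u : ℝ} (hu : u ≠ 0) :
    HasDerivAt (fun u => k / u) (-(k / u ^ 2)) u :=
  ((hasDerivAt_const u k).fun_div (hasDerivAt_id' u) hu).congr_deriv (by ring)

lemma hasDerivAt_const_div_sq (a : ℝ) {u : ℝ} (hu : u ≠ 0) :
    HasDerivAt (fun u => a / u ^ 2) (-(2 * a / u ^ 3)) u :=
  ((hasDerivAt_const u a).fun_div (hasDerivAt_pow 2 u) (pow_ne_zero 2 hu)).congr_deriv
    (by field_simp; ring)

section Substitution

variable {E : Type*} [NormedAddCommGroup E] [NormedSpace ℝ E] {k a : ℝ}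

lemma strictMonoOn_sub_const_div (hk : 0 ≤ k) : StrictMonoOn (fun u => u - k / u) (Ioi 0) :=
  fun _ hu _ _ huv => by
    have := div_le_div_of_nonneg_left hk hu huv.le
    dsimp only
    linarith

lemma image_sub_const_div_Ioi (hk : 0 < k) : (fun u => u - k / u) '' Ioi 0 = univ := by
  refine eq_univ_of_forall fun t => ?_
  set s := √(t ^ 2 + 4 * k)
  have hs : t ^ 2 + 4 * k = s ^ 2 := (sq_sqrt (by positivity)).symm
  have ht : |t| < s := by
    rw [← sqrt_sq_eq_abs]
    exact sqrt_lt_sqrt (sq_nonneg t) (by linarith)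
  have hu : 0 < (t + s) / 2 := by linarith [neg_abs_le t]
  have hku : k / ((t + s) / 2) = (s - t) / 2 := by
    rw [div_eq_iff hu.ne']
    linear_combination hs / 4
  exact ⟨_, hu, by simp only [hku]; ring⟩

lemma strictAntiOn_const_div (hk : 0 < k) : StrictAntiOn (fun u => k / u) (Ioi 0) :=
  fun _ hu _ _ huv => div_lt_div_of_pos_left hk hu huv

lemma image_const_div_Ioi (hk : 0 < k) : (fun u => k / u) '' Ioi 0 = Ioi 0 := by
  refine Subset.antisymm (image_subset_iff.2 fun u hu => div_pos hk hu) fun w hw => ?_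
  exact ⟨k / w, div_pos hk hw, div_div_cancel₀ hk.ne'⟩

lemma strictAntiOn_const_div_sq (ha : 0 < a) : StrictAntiOn (fun u => a / u ^ 2) (Ioi 0) :=
  fun _ hu _ _ huv =>
    div_lt_div_of_pos_left ha (pow_pos hu 2) (pow_lt_pow_left₀ huv hu.le two_ne_zero)

lemma image_const_div_sq_Ioi (ha : 0 < a) : (fun u => a / u ^ 2) '' Ioi 0 = Ioi 0 := by
  refine Subset.antisymm (image_subset_iff.2 fun u hu => div_pos ha (pow_pos hu 2)) fun w hw => ?_
  refine ⟨√(a / w), sqrt_pos.2 (div_pos ha hw), ?_⟩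
  simp only [sq_sqrt (div_pos ha hw).le]
  exact div_div_cancel₀ ha.ne'

lemma abs_one_add_div_sq (hk : 0 ≤ k) (u : ℝ) : |1 + k / u ^ 2| = 1 + k / u ^ 2 :=
  abs_of_nonneg (by positivity)

lemma abs_neg_div_sq (hk : 0 ≤ k) (u : ℝ) : |-(k / u ^ 2)| = k / u ^ 2 := by
  rw [abs_neg, abs_of_nonneg (by positivity)]

lemma abs_neg_two_mul_div_pow_three (ha : 0 < a) {u : ℝ} (hu : 0 < u) :
    |-(2 * a / u ^ 3)| = 2 * a / u ^ 3 := by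
  rw [abs_neg, abs_of_pos (by positivity)]

lemma integrableOn_smul_comp_sub_const_div_iff (hk : 0 < k) (f : ℝ → E) :
    IntegrableOn (fun u => (1 + k / u ^ 2) • f (u - k / u)) (Ioi 0) ↔ Integrable f := by
  have h := integrableOn_image_iff_integrableOn_abs_deriv_smul measurableSet_Ioi
    (fun u hu => (hasDerivAt_sub_const_div k (ne_of_gt hu)).hasDerivWithinAt)
    (strictMonoOn_sub_const_div hk.le).injOn f
  simpa only [image_sub_const_div_Ioi hk, integrableOn_univ, abs_one_add_div_sq hk.le] using h.symm

lemma integral_smul_comp_sub_const_div (hk : 0 < k) (f : ℝ → E) :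
    ∫ u in Ioi 0, (1 + k / u ^ 2) • f (u - k / u) = ∫ t, f t := by
  have h := integral_image_eq_integral_abs_deriv_smul measurableSet_Ioi
    (fun u hu => (hasDerivAt_sub_const_div k (ne_of_gt hu)).hasDerivWithinAt)
    (strictMonoOn_sub_const_div hk.le).injOn f
  simpa only [image_sub_const_div_Ioi hk, setIntegral_univ, abs_one_add_div_sq hk.le] using h.symm

lemma integrableOn_smul_comp_const_div_iff (hk : 0 < k) (f : ℝ → E) :
    IntegrableOn (fun u => (k / u ^ 2) • f (k / u)) (Ioi 0) ↔ IntegrableOn f (Ioi 0) := by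
  have h := integrableOn_image_iff_integrableOn_abs_deriv_smul measurableSet_Ioi
    (fun u hu => (hasDerivAt_const_div k (ne_of_gt hu)).hasDerivWithinAt)
    (strictAntiOn_const_div hk).injOn f
  simpa only [image_const_div_Ioi hk, abs_neg_div_sq hk.le] using h.symm

lemma integral_smul_comp_const_div (hk : 0 < k) (f : ℝ → E) :
    ∫ u in Ioi 0, (k / u ^ 2) • f (k / u) = ∫ v in Ioi 0, f v := by
  have h := integral_image_eq_integral_abs_deriv_smul measurableSet_Ioi
    (fun u hu => (hasDerivAt_const_div k (ne_of_gt hu)).hasDerivWithinAt)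
    (strictAntiOn_const_div hk).injOn f
  simpa only [image_const_div_Ioi hk, abs_neg_div_sq hk.le] using h.symm

lemma integrableOn_smul_comp_const_div_sq_iff (ha : 0 < a) (f : ℝ → E) :
    IntegrableOn (fun u => (2 * a / u ^ 3) • f (a / u ^ 2)) (Ioi 0) ↔
      IntegrableOn f (Ioi 0) := by
  have h := integrableOn_image_iff_integrableOn_abs_deriv_smul measurableSet_Ioi
    (fun u hu => (hasDerivAt_const_div_sq a (ne_of_gt hu)).hasDerivWithinAt)
    (strictAntiOn_const_div_sq ha).injOn f
  rw [image_const_div_sq_Ioi ha] at h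
  rw [h]
  exact integrableOn_congr_fun (fun u hu => by rw [abs_neg_two_mul_div_pow_three ha hu])
    measurableSet_Ioi

lemma integral_smul_comp_const_div_sq (ha : 0 < a) (f : ℝ → E) :
    ∫ u in Ioi 0, (2 * a / u ^ 3) • f (a / u ^ 2) = ∫ w in Ioi 0, f w := by
  have h := integral_image_eq_integral_abs_deriv_smul measurableSet_Ioi
    (fun u hu => (hasDerivAt_const_div_sq a (ne_of_gt hu)).hasDerivWithinAt)
    (strictAntiOn_const_div_sq ha).injOn f
  rw [image_const_div_sq_Ioi ha] at h
  rw [h]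
  exact setIntegral_congr_fun measurableSet_Ioi fun u hu => by
    rw [abs_neg_two_mul_div_pow_three ha hu]

lemma integrableOn_comp_sub_const_div {f : ℝ → E} (hf : Integrable f) (hk : 0 < k) :
    IntegrableOn (fun u => f (u - k / u)) (Ioi 0) := by
  have hone : ∀ u : ℝ, 1 ≤ 1 + k / u ^ 2 := fun u => by
    linarith [div_nonneg hk.le (sq_nonneg u)]
  refine IntegrableOn.congr_fun
    (Integrable.bdd_smul ((integrableOn_smul_comp_sub_const_div_iff hk f).2 hf) 1
      (φ := fun u => (1 + k / u ^ 2)⁻¹)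
      (by fun_prop : Measurable fun u : ℝ => (1 + k / u ^ 2)⁻¹).aestronglyMeasurable
      (Eventually.of_forall fun u => ?_))
    (fun u _ => ?_) measurableSet_Ioi
  · rw [norm_inv, Real.norm_eq_abs, abs_of_pos (one_pos.trans_le (hone u))]
    exact inv_le_one_of_one_le₀ (hone u)
  · simp [smul_smul, inv_mul_cancel₀ (one_pos.trans_le (hone u)).ne']

/-- The Cauchy–Schlömilch transformation. -/
theorem integral_comp_sub_const_div_of_even {f : ℝ → E} (hf : Integrable f)
    (heven : ∀ t, f (-t) = f t) (hk : 0 < k) :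
    ∫ u in Ioi 0, f (u - k / u) = (2 : ℝ)⁻¹ • ∫ t, f t := by
  have hg : IntegrableOn (fun u => f (u - k / u)) (Ioi 0) := integrableOn_comp_sub_const_div hf hk
  -- `u ↦ k / u` maps `u - k / u` to its negative
  have hsymm : ∀ u ∈ Ioi (0 : ℝ),
      (k / u ^ 2) • f (k / u - k / (k / u)) = (k / u ^ 2) • f (u - k / u) := fun u _ => by
    rw [div_div_cancel₀ hk.ne', ← heven, neg_sub]
  have hg' : IntegrableOn (fun u => (k / u ^ 2) • f (u - k / u)) (Ioi 0) :=
    ((integrableOn_smul_comp_const_div_iff hk _).2 hg).congr_fun hsymm measurableSet_Ioi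
  have hsum : ∫ t, f t =
      (∫ u in Ioi 0, f (u - k / u)) + ∫ u in Ioi 0, (k / u ^ 2) • f (u - k / u) := by
    rw [← integral_add hg hg', ← integral_smul_comp_sub_const_div hk f]
    simp only [add_smul, one_smul]
  rw [hsum, ← setIntegral_congr_fun measurableSet_Ioi hsymm,
    integral_smul_comp_const_div hk (fun v => f (v - k / v))]
  module

end Substitution

lemma integrable_exp_neg_sq : Integrable fun t : ℝ => rexp (-t ^ 2) := by
  simpa using integrable_exp_neg_mul_sq one_pos

lemma integral_exp_neg_sq : ∫ t, rexp (-t ^ 2) = √π := by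
  simpa using integral_gaussian 1

theorem integral_exp_neg_sq_sub_div_sq {d : ℝ} (hd : 0 < d) :
    ∫ u in Ioi 0, rexp (-u ^ 2 - d / u ^ 2) = √π / 2 * rexp (-(2 * √d)) := by
  have hsq : ∀ u ∈ Ioi (0 : ℝ),
      rexp (-u ^ 2 - d / u ^ 2) = rexp (-(2 * √d)) * rexp (-(u - √d / u) ^ 2) :=
    fun u (hu : 0 < u) => by
      rw [← exp_add]
      congr 1
      field_simp
      linear_combination sq_sqrt hd.le
  rw [setIntegral_congr_fun measurableSet_Ioi hsq, integral_const_mul,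
    integral_comp_sub_const_div_of_even integrable_exp_neg_sq (fun t => by simp) (sqrt_pos.2 hd),
    integral_exp_neg_sq, smul_eq_mul]
  ring

noncomputable def expNegSqSubDivSqIntegral (d : ℂ) : ℂ :=
  ∫ u in Ioi (0 : ℝ), cexp (-(u : ℂ) ^ 2 - d / (u : ℂ) ^ 2)

lemma norm_cexp_neg_sq_sub_div_sq (d : ℂ) (u : ℝ) :
    ‖cexp (-(u : ℂ) ^ 2 - d / (u : ℂ) ^ 2)‖ = rexp (-u ^ 2 - d.re / u ^ 2) := by
  rw [Complex.norm_exp, ← Complex.ofReal_pow, Complex.sub_re, Complex.neg_re, Complex.ofReal_re,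
    Complex.div_ofReal_re]

lemma norm_cexp_neg_sq_sub_div_sq_le {d : ℂ} (hd : 0 ≤ d.re) (u : ℝ) :
    ‖cexp (-(u : ℂ) ^ 2 - d / (u : ℂ) ^ 2)‖ ≤ rexp (-u ^ 2) := by
  rw [norm_cexp_neg_sq_sub_div_sq, exp_le_exp]
  linarith [div_nonneg hd (sq_nonneg u)]

lemma norm_cexp_neg_sq_sub_div_sq_div_sq_le {δ : ℝ} (hδ : 0 < δ) {d : ℂ} (hd : δ ≤ d.re)
    (u : ℝ) :
    ‖cexp (-(u : ℂ) ^ 2 - d / (u : ℂ) ^ 2) / (u : ℂ) ^ 2‖ ≤ δ⁻¹ * rexp (-u ^ 2) := by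
  rcases eq_or_ne u 0 with rfl | hu
  · rw [Complex.ofReal_zero, zero_pow two_ne_zero, div_zero, norm_zero]
    positivity
  have hu2 : 0 < u ^ 2 := by positivity
  have hy : δ / u ^ 2 * rexp (-(δ / u ^ 2)) ≤ 1 :=
    (mul_exp_neg_le_exp_neg_one _).trans (exp_le_one_iff.2 (by norm_num))
  rw [norm_div, norm_cexp_neg_sq_sub_div_sq, norm_pow, Complex.norm_real, Real.norm_eq_abs,
    sq_abs, sub_eq_add_neg, exp_add, div_le_iff₀ hu2]
  calc rexp (-u ^ 2) * rexp (-(d.re / u ^ 2))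
      ≤ rexp (-u ^ 2) * rexp (-(δ / u ^ 2)) := by gcongr
    _ = δ⁻¹ * rexp (-u ^ 2) * u ^ 2 * (δ / u ^ 2 * rexp (-(δ / u ^ 2))) := by field_simp
    _ ≤ δ⁻¹ * rexp (-u ^ 2) * u ^ 2 := mul_le_of_le_one_right (by positivity) hy

lemma integrable_cexp_neg_sq_sub_div_sq {d : ℂ} (hd : 0 ≤ d.re) :
    Integrable fun u : ℝ => cexp (-(u : ℂ) ^ 2 - d / (u : ℂ) ^ 2) :=
  integrable_exp_neg_sq.mono' (by fun_prop : Measurable _).aestronglyMeasurable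
    (Eventually.of_forall (norm_cexp_neg_sq_sub_div_sq_le hd))

lemma hasDerivAt_cexp_neg_sq_sub_div_sq (u : ℝ) (d : ℂ) :
    HasDerivAt (fun d : ℂ => cexp (-(u : ℂ) ^ 2 - d / (u : ℂ) ^ 2))
      (-(cexp (-(u : ℂ) ^ 2 - d / (u : ℂ) ^ 2) / (u : ℂ) ^ 2)) d :=
  (((hasDerivAt_id' d).div_const _).const_sub _).cexp.congr_deriv (by ring)

lemma expNegSqSubDivSqIntegral_ofReal {d : ℝ} (hd : 0 < d) :
    expNegSqSubDivSqIntegral d = ↑(√π / 2 * rexp (-(2 * √d))) := by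
  rw [← integral_exp_neg_sq_sub_div_sq hd, ← integral_complex_ofReal, expNegSqSubDivSqIntegral]
  push_cast
  rfl

lemma continuousOn_expNegSqSubDivSqIntegral :
    ContinuousOn expNegSqSubDivSqIntegral {d | 0 ≤ d.re} :=
  continuousOn_of_dominated (fun _ _ => (by fun_prop : Measurable _).aestronglyMeasurable)
    (fun _ hd => Eventually.of_forall (norm_cexp_neg_sq_sub_div_sq_le hd))
    integrable_exp_neg_sq.integrableOn
    (Eventually.of_forall fun _ => by fun_prop)

lemma differentiableOn_expNegSqSubDivSqIntegral :
    DifferentiableOn ℂ expNegSqSubDivSqIntegral {d | 0 < d.re} := by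
  intro d (hd : 0 < d.re)
  have hball : ∀ z ∈ Metric.ball d (d.re / 2), d.re / 2 ≤ z.re := fun z hz => by
    have := (Complex.abs_re_le_norm (z - d)).trans (mem_ball_iff_norm.1 hz).le
    rw [Complex.sub_re, abs_le] at this
    linarith
  have hbound : ∀ᵐ u : ℝ ∂(volume.restrict (Ioi 0)), ∀ z ∈ Metric.ball d (d.re / 2),
      ‖-(cexp (-(u : ℂ) ^ 2 - z / (u : ℂ) ^ 2) / (u : ℂ) ^ 2)‖ ≤
        (d.re / 2)⁻¹ * rexp (-u ^ 2) :=
    Eventually.of_forall fun u z hz => by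
      rw [norm_neg]
      exact norm_cexp_neg_sq_sub_div_sq_div_sq_le (half_pos hd) (hball z hz) u
  have hderiv := hasDerivAt_integral_of_dominated_loc_of_deriv_le (μ := volume.restrict (Ioi 0))
    (F := fun z (u : ℝ) => cexp (-(u : ℂ) ^ 2 - z / (u : ℂ) ^ 2))
    (F' := fun z (u : ℝ) => -(cexp (-(u : ℂ) ^ 2 - z / (u : ℂ) ^ 2) / (u : ℂ) ^ 2))
    (Metric.ball_mem_nhds d (half_pos hd))
    (Eventually.of_forall fun _ => (by fun_prop : Measurable _).aestronglyMeasurable)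
    (integrable_cexp_neg_sq_sub_div_sq hd.le).integrableOn
    (by fun_prop : Measurable _).aestronglyMeasurable hbound
    (integrable_exp_neg_sq.const_mul _).integrableOn
    (Eventually.of_forall fun u z _ => hasDerivAt_cexp_neg_sq_sub_div_sq u z)
  exact hderiv.2.differentiableAt.differentiableWithinAt

lemma differentiableOn_cexp_neg_two_mul_cpow_half :
    DifferentiableOn ℂ (fun d : ℂ => cexp (-2 * d ^ (1 / 2 : ℂ))) {d | 0 < d.re} :=
  fun _ hd => ((differentiableAt_id.cpow_const (Or.inl hd)).const_mul _).cexp.differentiableWithinAt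

lemma continuousOn_cexp_neg_two_mul_cpow_half :
    ContinuousOn (fun d : ℂ => cexp (-2 * d ^ (1 / 2 : ℂ))) {d | 0 ≤ d.re} :=
  fun _ hd => (((Complex.continuousAt_cpow_const_of_re_pos (Or.inl hd) (by norm_num)).const_mul
    _).cexp).continuousWithinAt

lemma ofReal_cpow_half {x : ℝ} (hx : 0 ≤ x) : (x : ℂ) ^ (1 / 2 : ℂ) = √x := by
  rw [sqrt_eq_rpow, Complex.ofReal_cpow hx]
  norm_num

lemma expNegSqSubDivSqIntegral_eq_of_re_pos {d : ℂ} (hd : 0 < d.re) :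
    expNegSqSubDivSqIntegral d = √π / 2 * cexp (-2 * d ^ (1 / 2 : ℂ)) := by
  have hopen : IsOpen {d : ℂ | 0 < d.re} := isOpen_lt continuous_const Complex.continuous_re
  have hreal : Tendsto ((↑) : ℝ → ℂ) (𝓝[≠] 1) (𝓝[≠] 1) :=
    tendsto_nhdsWithin_iff.2
      ⟨tendsto_nhdsWithin_of_tendsto_nhds Complex.continuous_ofReal.continuousAt,
        eventually_nhdsWithin_of_forall fun _ ht => Complex.ofReal_ne_one.2 ht⟩
  have hfreq : ∃ᶠ t : ℝ in 𝓝[≠] 1,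
      expNegSqSubDivSqIntegral t = √π / 2 * cexp (-2 * (t : ℂ) ^ (1 / 2 : ℂ)) :=
    ((eventually_gt_nhds one_pos).filter_mono nhdsWithin_le_nhds).frequently.mono fun t ht => by
      rw [expNegSqSubDivSqIntegral_ofReal ht, ofReal_cpow_half ht.le]
      push_cast
      ring_nf
  exact (differentiableOn_expNegSqSubDivSqIntegral.analyticOnNhd hopen)
    |>.eqOn_of_preconnected_of_frequently_eq
    ((differentiableOn_cexp_neg_two_mul_cpow_half.const_mul _).analyticOnNhd hopen)
    (convex_halfSpace_re_gt 0).isPreconnected (z₀ := 1) (by simp) (hreal.frequently hfreq) hd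

theorem expNegSqSubDivSqIntegral_eq {d : ℂ} (hd : 0 ≤ d.re) :
    expNegSqSubDivSqIntegral d = √π / 2 * cexp (-2 * d ^ (1 / 2 : ℂ)) :=
  EqOn.of_subset_closure (s := {z : ℂ | 0 < z.re})
    (fun _ hz => expNegSqSubDivSqIntegral_eq_of_re_pos hz)
    continuousOn_expNegSqSubDivSqIntegral (continuousOn_cexp_neg_two_mul_cpow_half.const_mul _)
    (fun z (hz : 0 < z.re) => hz.le) (Complex.closure_setOfPred_lt_re 0).ge hd

lemma cpow_half_neg_mul_I {q : ℝ} (hq : 0 ≤ q) :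
    (-q * I) ^ (1 / 2 : ℂ) = √(2 * q) / 2 * (1 - I) := by
  set c := √(2 * q) / 2
  have hc : 0 ≤ c := by positivity
  have hsq : (-q * I : ℂ) = ((c : ℂ) * (1 - I)) ^ 2 := by
    have h := congrArg ((↑) : ℝ → ℂ) (sq_sqrt (by positivity : 0 ≤ 2 * q))
    push_cast at h
    simp only [c]
    push_cast
    linear_combination (-1 / 4 * (1 - I) ^ 2) * h - q / 2 * Complex.I_sq
  have hre : ((c : ℂ) * (1 - I)).re = c := by simp
  have him : ((c : ℂ) * (1 - I)).im = -c := by simp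
  rw [hsq, one_div, Complex.pow_cpow_ofNat_inv]
  · push_cast [c]
    ring
  · rw [Complex.neg_pi_div_two_lt_arg_iff, hre, him]
    exact hc.lt_or_eq.imp id fun h => by linarith
  · rw [Complex.arg_le_pi_div_two_iff, hre]
    exact Or.inl hc

lemma expNegSqSubDivSqIntegral_neg_mul_I {q : ℝ} (hq : 0 ≤ q) :
    expNegSqSubDivSqIntegral (-q * I) = √π / 2 * cexp (-(1 - I) * √(2 * q)) := by
  rw [expNegSqSubDivSqIntegral_eq (by simp), cpow_half_neg_mul_I hq]
  ring_nf

lemma const_div_sq_rpow_neg_three_halves {a u : ℝ} (ha : 0 < a) (hu : 0 < u) :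
    (a / u ^ 2) ^ (-(3 : ℝ) / 2) = (u / √a) ^ 3 := by
  have hsq : a / u ^ 2 = (√a / u) ^ 2 := by rw [div_pow, sq_sqrt ha.le]
  rw [hsq, ← rpow_natCast, ← rpow_mul (by positivity), ← inv_div, inv_rpow (by positivity),
    ← rpow_neg (by positivity)]
  norm_num

lemma smul_rpow_neg_three_halves_exp_smul_cexp_const_div_sq {a β u : ℝ} (ha : 0 < a)
    (hu : 0 < u) :
    (2 * a / u ^ 3) • (((a / u ^ 2) ^ (-(3 : ℝ) / 2) * rexp (-a / (a / u ^ 2))) •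
      cexp (↑(β * (a / u ^ 2)) * I)) =
    (2 / √a) • cexp (-(u : ℂ) ^ 2 - -↑(a * β) * I / (u : ℂ) ^ 2) := by
  have hcoef : 2 * a / u ^ 3 * (u / √a) ^ 3 = 2 / √a := by
    have h3 : √a ^ 3 = a * √a := by rw [pow_succ, sq_sqrt ha.le, mul_comm]
    rw [div_pow, h3]
    field_simp
  rw [const_div_sq_rpow_neg_three_halves ha hu, smul_smul, ← mul_assoc, hcoef, neg_div,
    div_div_cancel₀ ha.ne', mul_smul, Complex.real_smul (x := rexp _), Complex.ofReal_exp,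
    ← Complex.exp_add]
  congr 2
  push_cast
  field_simp
  ring

theorem integral_rpow_neg_three_halves_exp_smul_cexp {a β : ℝ} (ha : 0 < a) (hβ : 0 ≤ β) :
    IntegrableOn (fun w : ℝ => (w ^ (-(3 : ℝ) / 2) * rexp (-a / w)) • cexp (↑(β * w) * I))
      (Ioi 0) ∧
    ∫ w in Ioi 0, (w ^ (-(3 : ℝ) / 2) * rexp (-a / w)) • cexp (↑(β * w) * I) =
      √(π / a) * cexp (-(1 - I) * √(2 * a * β)) := by
  have hsubst := fun u (hu : u ∈ Ioi (0 : ℝ)) =>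
    smul_rpow_neg_three_halves_exp_smul_cexp_const_div_sq (β := β) ha hu
  have hint := (integrable_cexp_neg_sq_sub_div_sq (d := -↑(a * β) * I) (by simp)).integrableOn
    (s := Ioi 0)
  refine ⟨(integrableOn_smul_comp_const_div_sq_iff ha _).1
    (IntegrableOn.congr_fun (hint.smul (2 / √a)) (fun u hu => (hsubst u hu).symm)
      measurableSet_Ioi), ?_⟩
  rw [← integral_smul_comp_const_div_sq ha, setIntegral_congr_fun measurableSet_Ioi hsubst,
    integral_smul, ← expNegSqSubDivSqIntegral,
    expNegSqSubDivSqIntegral_neg_mul_I (mul_nonneg ha.le hβ), sqrt_div' _ ha.le,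
    Complex.real_smul, mul_assoc 2 a β]
  push_cast
  field_simp

/-- Real part of the half-line Fourier transform of `f(w) = w^(-3/2) e^(-a/w)`:
for `a > 0` and `β > 0`, `∫_0^∞ w^(-3/2) e^(-a/w) cos(βw) dw` converges and
equals `√(π/a) · e^(-√(2aβ)) · cos(√(2aβ))`. -/
theorem integral_rpow_neg_three_halves_exp_cos (a β : ℝ)
    (ha : 0 < a) (hβ : 0 < β) :
    IntegrableOn
      (fun w : ℝ => w ^ (-(3 : ℝ) / 2) * Real.exp (-a / w) * Real.cos (β * w))
      (Ioi (0 : ℝ)) ∧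
    ∫ w in Ioi (0 : ℝ),
        w ^ (-(3 : ℝ) / 2) * Real.exp (-a / w) * Real.cos (β * w)
      = Real.sqrt (π / a) * Real.exp (-Real.sqrt (2 * a * β))
          * Real.cos (Real.sqrt (2 * a * β)) := by
  obtain ⟨hint, hval⟩ := integral_rpow_neg_three_halves_exp_smul_cexp ha hβ.le
  have hre : ∀ w : ℝ, ((w ^ (-(3 : ℝ) / 2) * rexp (-a / w)) • cexp (↑(β * w) * I)).re =
      w ^ (-(3 : ℝ) / 2) * rexp (-a / w) * cos (β * w) := fun w => by
    rw [Complex.smul_re, Complex.exp_ofReal_mul_I_re, smul_eq_mul]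
  have hint_re := hint.re
  have hval_re := integral_re hint
  simp only [RCLike.re_to_complex, hre] at hint_re hval_re
  refine ⟨hint_re, ?_⟩
  rw [hval_re, hval, Complex.re_ofReal_mul, Complex.exp_re]
  simp only [neg_sub, Complex.mul_re, Complex.sub_re, Complex.I_re, Complex.one_re, zero_sub,
    Complex.ofReal_re, neg_mul, one_mul, Complex.sub_im, Complex.I_im, Complex.one_im, sub_zero,
    Complex.ofReal_im, mul_zero, Complex.mul_im, zero_add]
  ring
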